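/- arXiv:2603.01815 — 2 statements merged into one kernel-verified Lean document; each statement's English description precedes it below -/
import Mathlib

section
/- Let (K,v) be a valued field whose residue field is k. If K is C_i and v is henselian, then k is C_i. -/
/-- A field `k` is `C_i` if every homogeneous polynomial of degree `d ≥ 1` in `n + 1`
variables with `d ^ i ≤ n` has a non-trivial zero over `k`. -/
def IsCi (k : Type*) [Field k] (i : ℕ) : Prop :=
  ∀ (n d : ℕ), 0 < d → d ^ i ≤ n →
    ∀ f : MvPolynomial (Fin (n + 1)) k, f.IsHomogeneous d →
      ∃ x : Fin (n + 1) → k, x ≠ 0 ∧ MvPolynomial.eval x f = 0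

/-!
Lift a form over the residue field to a form of the same degree over the valuation ring and take
a nontrivial zero over `K`. Dividing it by a coordinate of largest valuation puts it in the
valuation ring with one coordinate equal to `1`, so its reduction is a nontrivial zero of the
original form.
-/

open MvPolynomial

namespace MvPolynomial

variable {σ R : Type*} [CommSemiring R]

theorem IsHomogeneous.eval_smul {φ : MvPolynomial σ R} {n : ℕ} (hφ : φ.IsHomogeneous n)
    (c : R) (x : σ → R) : eval (c • x) φ = c ^ n * eval x φ := by
  simp only [eval_eq, Finset.mul_sum]
  refine Finset.sum_congr rfl fun s hs => ?_
  rw [hφ.degree_eq_sum_deg_support hs, ← Finset.prod_pow_eq_pow_sum]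
  simp only [Pi.smul_apply, smul_eq_mul, mul_pow, Finset.prod_mul_distrib]
  ring

theorem map_homogeneousComponent {S : Type*} [CommSemiring S] (f : R →+* S) (n : ℕ)
    (φ : MvPolynomial σ R) :
    map f (homogeneousComponent n φ) = homogeneousComponent n (map f φ) := by
  ext s
  simp only [coeff_map, coeff_homogeneousComponent, apply_ite f, map_zero]

theorem exists_isHomogeneous_map_eq {S : Type*} [CommSemiring S] {f : R →+* S}
    (hf : Function.Surjective f) {ψ : MvPolynomial σ S} {n : ℕ} (hψ : ψ.IsHomogeneous n) :
    ∃ φ : MvPolynomial σ R, φ.IsHomogeneous n ∧ map f φ = ψ := by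
  obtain ⟨φ, rfl⟩ := map_surjective f hf ψ
  exact ⟨homogeneousComponent n φ, homogeneousComponent_isHomogeneous n φ,
    by rw [map_homogeneousComponent, homogeneousComponent_eq_self hψ]⟩

end MvPolynomial

namespace ValuationSubring

variable {K : Type*} [Field K] (A : ValuationSubring K)

theorem exists_forall_div_mem {ι : Type*} [Finite ι] {x : ι → K} (hx : x ≠ 0) :
    ∃ j, x j ≠ 0 ∧ ∀ t, x t / x j ∈ A := by
  obtain ⟨t₀, hxt₀⟩ := Function.ne_iff.mp hx
  have : Nonempty ι := ⟨t₀⟩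
  obtain ⟨j, hj⟩ := Finite.exists_max fun t => A.valuation (x t)
  have hxj : x j ≠ 0 := fun h => hxt₀ (by simpa [h] using hj t₀)
  refine ⟨j, hxj, fun t => A.mem_of_valuation_le_one _ ?_⟩
  rw [map_div₀]
  exact div_le_one_of_le₀ (hj t) zero_le

theorem isCi_residueField {i : ℕ} (hK : IsCi K i) : IsCi (IsLocalRing.ResidueField A) i := by
  intro n d hd hdi f hf
  obtain ⟨g, hg, rfl⟩ := exists_isHomogeneous_map_eq IsLocalRing.residue_surjective hf
  obtain ⟨x, hx0, hx⟩ := hK n d hd hdi _ (hg.map (algebraMap A K))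
  obtain ⟨j, hxj, hmem⟩ := A.exists_forall_div_mem hx0
  let y : Fin (n + 1) → A := fun t => ⟨x t / x j, hmem t⟩
  have hy : eval y g = 0 := by
    refine Subtype.ext ?_
    have hxy : (x j)⁻¹ • x = algebraMap A K ∘ y := funext fun t => inv_mul_eq_div _ _
    calc (eval y g : K) = eval ((x j)⁻¹ • x) (map (algebraMap A K) g) := by
          rw [hxy, eval_map, ← eval₂_comp]
          rfl
      _ = 0 := by rw [(hg.map _).eval_smul, hx, mul_zero]
  refine ⟨IsLocalRing.residue A ∘ y, Function.ne_iff.mpr ⟨j, ?_⟩, ?_⟩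
  · have hyj : y j = 1 := Subtype.ext (div_self hxj)
    simp [hyj]
  · rw [eval_map, ← eval₂_comp, hy, map_zero]

end ValuationSubring

theorem isCi_residueField_of_henselian_general
    (K : Type*) [Field K] (Γ : Type*) [LinearOrderedCommGroupWithZero Γ]
    (v : Valuation K Γ) (i : ℕ)
    (hK : IsCi K i) :
    IsCi (IsLocalRing.ResidueField v.valuationSubring) i :=
  v.valuationSubring.isCi_residueField hK

/-- If `(K, v)` is a henselian valued field and `K` is `C_i`, then the residue field of the
valuation ring of `v` is `C_i`. -/
theorem isCi_residueField_of_henselian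
    (K : Type*) [Field K] (Γ : Type*) [LinearOrderedCommGroupWithZero Γ]
    (v : Valuation K Γ) (i : ℕ)
    (hK : IsCi K i) (hhens : HenselianLocalRing v.valuationSubring) :
    IsCi (IsLocalRing.ResidueField v.valuationSubring) i :=
  isCi_residueField_of_henselian_general K Γ v i hK
end

section
/- Let k ⊆ l be a finite extension of fields and let K be a field containing k such that l and K are linearly disjoint subfields of a common extension with l·K/K finite. If x ∈ (l·K)^× actually lies in l, then N_{lK/K}(x) = N_{l/k'}(x) where k' = l ∩ K, provided lK/K and l/k' have the same degree. -/
open Module Submodule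

/-!
The image in `lK` of a `k'`-basis of `l` spans `lK` over `K`, since `lK` is generated by `l` and
`K`; having `[l : k'] = [lK : K]` elements, it is a `K`-basis of `lK`. In these two bases
multiplication by `x ∈ l` has the same matrix, so the two norms are the same determinant.
-/

section

variable {R S K M : Type*} [CommSemiring R] [CommSemiring S] [CommSemiring K] [CommSemiring M]
  [Algebra R S] [Algebra R K] [Algebra R M] [Algebra S M] [Algebra K M]
  [IsScalarTower R S M] [IsScalarTower R K M]

theorem span_range_algebraMap_eq_top_of_sup_range_eq_top
    (h : (IsScalarTower.toAlgHom R S M).range ⊔ (IsScalarTower.toAlgHom R K M).range = ⊤) :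
    span K (Set.range (algebraMap S M)) = ⊤ := by
  have hadjoin : Algebra.adjoin K (Set.range (algebraMap S M)) = ⊤ := by
    refine Subalgebra.restrictScalars_injective R <|
      (top_unique ?_).trans (Subalgebra.restrictScalars_top R).symm
    rw [← h]
    refine sup_le ?_ ?_ <;> rintro _ ⟨y, rfl⟩
    · show algebraMap S M y ∈ Algebra.adjoin K _
      exact Algebra.subset_adjoin (Set.mem_range_self y)
    · show algebraMap K M y ∈ Algebra.adjoin K _
      exact Subalgebra.algebraMap_mem _ y
  rw [← MonoidHom.coe_mrange, ← MonoidHom.mclosure_range, ← Algebra.adjoin_eq_span, hadjoin,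
    Algebra.top_toSubmodule]

variable {ι : Type*}

theorem Module.Basis.span_range_algebraMap_comp (b : Basis ι R S) :
    span K (Set.range (algebraMap S M ∘ b)) = span K (Set.range (algebraMap S M)) := by
  let φ := (IsScalarTower.toAlgHom R S M).toLinearMap
  rw [← span_span_of_tower R, Set.range_comp,
    ← span_span_of_tower R K (Set.range (algebraMap S M))]
  congr 2
  change span R (φ '' _) = span R (Set.range φ)
  rw [span_image, b.span_eq, Submodule.map_top, ← LinearMap.coe_range, span_eq]

variable [Fintype ι]

theorem Module.Basis.algebraMap_eq_sum_repr_smul (b : Basis ι R S) (y : S) :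
    algebraMap S M y = ∑ i, algebraMap R K (b.repr y i) • algebraMap S M (b i) := by
  conv_lhs => rw [← b.sum_repr y]
  rw [map_sum]
  congr! 1 with i
  rw [← IsScalarTower.toAlgHom_apply R S M, map_smul, IsScalarTower.toAlgHom_apply,
    algebraMap_smul]

theorem Module.Basis.repr_algebraMap_of_apply_eq (b : Basis ι R S) (b' : Basis ι K M)
    (hb' : ∀ i, b' i = algebraMap S M (b i)) (y : S) (i : ι) :
    b'.repr (algebraMap S M y) i = algebraMap R K (b.repr y i) := by
  simp_rw [b.algebraMap_eq_sum_repr_smul (K := K) y, ← hb', b'.repr_sum_self]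

variable [DecidableEq ι]

theorem Algebra.leftMulMatrix_algebraMap_of_apply_eq (b : Basis ι R S) (b' : Basis ι K M)
    (hb' : ∀ i, b' i = algebraMap S M (b i)) (x : S) :
    Algebra.leftMulMatrix b' (algebraMap S M x) =
      (algebraMap R K).mapMatrix (Algebra.leftMulMatrix b x) := by
  ext i j
  rw [RingHom.mapMatrix_apply, Matrix.map_apply, Algebra.leftMulMatrix_eq_repr_mul,
    Algebra.leftMulMatrix_eq_repr_mul, hb', ← map_mul, b.repr_algebraMap_of_apply_eq b' hb']

end

theorem Algebra.norm_algebraMap_of_basis_apply_eq {R S K M ι : Type*}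
    [CommRing R] [CommRing S] [CommRing K] [CommRing M]
    [Algebra R S] [Algebra R K] [Algebra R M] [Algebra S M] [Algebra K M]
    [IsScalarTower R S M] [IsScalarTower R K M] [Fintype ι]
    (b : Basis ι R S) (b' : Basis ι K M) (hb' : ∀ i, b' i = algebraMap S M (b i)) (x : S) :
    Algebra.norm K (algebraMap S M x) = algebraMap R K (Algebra.norm R x) := by
  classical
  rw [Algebra.norm_eq_matrix_det b', Algebra.norm_eq_matrix_det b,
    Algebra.leftMulMatrix_algebraMap_of_apply_eq b b' hb', RingHom.map_det]

theorem norm_compositum_eq_norm_of_linearlyDisjoint_general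
    (k k' l K M : Type*)
    [Field k] [Field k'] [Field l] [Field K] [Field M]
    [Algebra k l] [Algebra k K] [Algebra k M]
    [Algebra k k'] [Algebra k' l] [Algebra k' K] [Algebra k' M]
    [Algebra l M] [Algebra K M]
    [IsScalarTower k k' l]
    [IsScalarTower k l M] [IsScalarTower k K M]
    [IsScalarTower k' l M] [IsScalarTower k' K M]
    [FiniteDimensional k l]
    -- `M` is the compositum `l·K`
    (hcomp : (IsScalarTower.toAlgHom k l M).range ⊔ (IsScalarTower.toAlgHom k K M).range = ⊤)
    -- the two extensions have the same degree
    (hdeg : finrank K M = finrank k' l)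
    (x : l) :
    Algebra.norm K (algebraMap l M x) = algebraMap k' K (Algebra.norm k' x) := by
  have : FiniteDimensional k' l := .right k k' l
  let b := finBasis k' l
  have hspan : ⊤ ≤ span K (Set.range (algebraMap l M ∘ b)) := by
    rw [b.span_range_algebraMap_comp, span_range_algebraMap_eq_top_of_sup_range_eq_top hcomp]
  let b' := basisOfTopLeSpanOfCardEqFinrank _ hspan (by simp [hdeg])
  exact Algebra.norm_algebraMap_of_basis_apply_eq b b'
    (fun i => by simp [b']) x

/-- Let `l/k` be a finite extension, `K ⊇ k` another field, and `M = l·K` a compositum of `l`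
and `K` (over `k`) in which `l` and `K` are linearly disjoint, with `M/K` finite.  Let
`k' = l ∩ K`.  If `[lK : K] = [l : k']`, then for `x ∈ l` the norm of `x` in `lK/K` equals its
norm in `l/k'` (viewed in `K`). -/
theorem norm_compositum_eq_norm_of_linearlyDisjoint
    (k k' l K M : Type*)
    [Field k] [Field k'] [Field l] [Field K] [Field M]
    [Algebra k l] [Algebra k K] [Algebra k M]
    [Algebra k k'] [Algebra k' l] [Algebra k' K] [Algebra k' M]
    [Algebra l M] [Algebra K M]
    [IsScalarTower k k' l] [IsScalarTower k k' K]
    [IsScalarTower k l M] [IsScalarTower k K M]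
    [IsScalarTower k' l M] [IsScalarTower k' K M]
    [FiniteDimensional k l] [FiniteDimensional K M]
    -- `l` and `K` are linearly disjoint over `k` inside `M`
    (hdisj : Function.Injective (Algebra.TensorProduct.productMap
      (IsScalarTower.toAlgHom k l M) (IsScalarTower.toAlgHom k K M)))
    -- `M` is the compositum `l·K`
    (hcomp : (IsScalarTower.toAlgHom k l M).range ⊔ (IsScalarTower.toAlgHom k K M).range = ⊤)
    -- `k' = l ∩ K`: an element of `l` lies in `K` (inside `M`) iff it comes from `k'`
    (hint : ∀ y : l, (∃ z : K, algebraMap l M y = algebraMap K M z) ↔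
      ∃ w : k', algebraMap k' l w = y)
    -- the two extensions have the same degree
    (hdeg : finrank K M = finrank k' l)
    (x : l) :
    Algebra.norm K (algebraMap l M x) = algebraMap k' K (Algebra.norm k' x) :=
  norm_compositum_eq_norm_of_linearlyDisjoint_general k k' l K M hcomp hdeg x
end
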